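/- In an inverted forest (all summits are self-loops), summits distribute over disjoint union with subtraction: if summits (γ₁ ⊕ γ₂) ⊆ loops (γ₁ ⊕ γ₂), then summits (γ₁ ⊕ γ₂) = (summits γ₁ \ nodes γ₂) ∪ (summits γ₂ \ nodes γ₁). -/

import Mathlib

open scoped Classical

/-- A partial graph of type `T`: a finite partial map from nodes (natural
numbers, undefined on `0 = null`) to pairs of a value and an adjacency list. -/
structure PGraph (T : Type) where
  f : ℕ → Option (T × List ℕ)
  dom : Finset ℕ
  mem_dom : ∀ x, x ∈ dom ↔ (f x).isSome
  null_not_mem : f 0 = none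

namespace PGraph

variable {T T' : Type}

def empty : PGraph T :=
  ⟨fun _ => none, ∅, by intro x; simp, rfl⟩

/-- Total (left-biased) union; meaningful when domains are disjoint. -/
def union (γ₁ γ₂ : PGraph T) : PGraph T where
  f := fun x => match γ₁.f x with
    | some v => some v
    | none => γ₂.f x
  dom := γ₁.dom ∪ γ₂.dom
  mem_dom := by
    intro x
    rw [Finset.mem_union, γ₁.mem_dom, γ₂.mem_dom]
    cases h : γ₁.f x <;> simp [h]
  null_not_mem := by simp [γ₁.null_not_mem, γ₂.null_not_mem]

/-- The partial PCM join: defined iff the domains are disjoint. -/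
noncomputable def join (γ₁ γ₂ : PGraph T) : Option (PGraph T) :=
  if Disjoint γ₁.dom γ₂.dom then some (union γ₁ γ₂) else none

/-- Filter (restriction) of a graph to a set of nodes. -/
noncomputable def restrict (γ : PGraph T) (S : Set ℕ) : PGraph T where
  f := fun x => if x ∈ S then γ.f x else none
  dom := γ.dom.filter (fun x => x ∈ S)
  mem_dom := by
    intro x
    rw [Finset.mem_filter, γ.mem_dom]
    by_cases h : x ∈ S <;> simp [h]
  null_not_mem := by simp [γ.null_not_mem]

/-- Map combinator: apply `g` pointwise at each node. -/
def mapNode (g : ℕ → T × List ℕ → T' × List ℕ) (γ : PGraph T) : PGraph T' where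
  f := fun x => (γ.f x).map (g x)
  dom := γ.dom
  mem_dom := by intro x; rw [γ.mem_dom]; cases h : γ.f x <;> simp [h]
  null_not_mem := by simp [γ.null_not_mem]

/-- Erasure: replace every value with the unit value, keeping adjacency. -/
def erasure (γ : PGraph T) : PGraph Unit :=
  mapNode (fun _ p => ((), p.2)) γ

/-- Adjacency list of a node. -/
def adj (γ : PGraph T) (x : ℕ) : List ℕ :=
  ((γ.f x).map Prod.snd).getD []

/-- The value stored at a node, if any. -/
def val? (γ : PGraph T) (x : ℕ) : Option T :=
  (γ.f x).map Prod.fst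

/-- Sinks: nodes appearing in some adjacency list. -/
def sinks (γ : PGraph T) : Set ℕ :=
  ⋃ x ∈ γ.dom, {y | y ∈ γ.adj x}

/-- A graph is closed if it has no dangling edges. -/
def Closed (γ : PGraph T) : Prop :=
  sinks γ ⊆ insert 0 (↑γ.dom : Set ℕ)

/-- Remove a node (and its outgoing edges) from the graph. -/
def erase (γ : PGraph T) (y : ℕ) : PGraph T where
  f := fun x => if x = y then none else γ.f x
  dom := γ.dom.erase y
  mem_dom := by
    intro x
    rw [Finset.mem_erase, γ.mem_dom]
    by_cases h : x = y <;> simp [h]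
  null_not_mem := by
    by_cases h : (0 : ℕ) = y <;> simp [h, γ.null_not_mem]

/-- Set of nodes reachable from `x` in `γ`. -/
def reach (γ : PGraph T) (x : ℕ) : Set ℕ :=
  if h : x ∈ γ.dom then
    {x} ∪ ⋃ y ∈ γ.adj x, reach (γ.erase x) y
  else ∅
termination_by γ.dom.card
decreasing_by simpa [PGraph.erase] using Finset.card_erase_lt_of_mem h

/-- Summits of a path starting at `x`. -/
def summit (γ : PGraph T) (x : ℕ) : Set ℕ :=
  if h : x ∈ γ.dom then ⋃ y ∈ γ.adj x, summit (γ.erase x) y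
  else {x}
termination_by γ.dom.card
decreasing_by simpa [PGraph.erase] using Finset.card_erase_lt_of_mem h

/-- All summits of a graph. -/
def summits (γ : PGraph T) : Set ℕ :=
  ⋃ x ∈ γ.dom, summit γ x

/-- Nodes that lie on a cycle (reachable from one of their own children). -/
def cycles (γ : PGraph T) : Set ℕ :=
  {x | x ∈ ⋃ y ∈ γ.adj x, reach γ y}

/-- Targets of dangling edges. -/
def dangls (γ : PGraph T) : Set ℕ :=
  sinks γ \ ↑γ.dom

/-- Nodes forming cycles of size one. -/
def loops (γ : PGraph T) : Set ℕ :=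
  {x | x ∈ γ.dom ∧ x ∈ γ.adj x}

/-- Filter by contents: keep nodes whose value lies in `V`. -/
noncomputable def filterVal (γ : PGraph T) (V : Set T) : PGraph T :=
  γ.restrict {x | ∃ v ∈ V, γ.val? x = some v}

/-- Update the entry at node `x` (if present). -/
def update (γ : PGraph T) (x : ℕ) (p : T × List ℕ) : PGraph T where
  f := fun y => if y = x then (γ.f y).map (fun _ => p) else γ.f y
  dom := γ.dom
  mem_dom := by
    intro y
    rw [γ.mem_dom]
    by_cases h : y = x
    · subst h; cases hf : γ.f y <;> simp [hf]
    · simp [h]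
  null_not_mem := by
    by_cases h : (0 : ℕ) = x
    · subst h; simp [γ.null_not_mem]
    · simp [h, γ.null_not_mem]

/-- Binary graphs: every adjacency list has exactly two elements. -/
def Binary (γ : PGraph T) : Prop :=
  ∀ x p, γ.f x = some p → p.2.length = 2

/-- Marks of the Schorr-Waite algorithm. -/
inductive Mark | O | L | R | X
deriving DecidableEq

/-- The `if-mark` transformation on a node's mark and children. -/
def ifMark (f : ℕ → ℕ) (x : ℕ) : Mark × List ℕ → Unit × List ℕ
  | (Mark.L, [_, r]) => ((), [f x, r])
  | (Mark.R, [l, _]) => ((), [l, f x])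
  | (_, l) => ((), l)

end PGraph

/-!
Every summit of `γ₁ ⊕ γ₂` is a loop, hence a node of exactly one `γᵢ` carrying the same self-loop
there, and a self-loop is its own summit. Conversely, a path of `γ₁` ends at the same summit in the
left-biased union unless that summit is a node of `γ₂`; the case of `γ₂` follows by commutativity
of disjoint union.
-/

namespace PGraph

variable {T : Type}

theorem ext_of_f_eq {γ γ' : PGraph T} (hf : γ.f = γ'.f) : γ = γ' := by
  have hdom : γ.dom = γ'.dom := Finset.ext fun x => by rw [γ.mem_dom, γ'.mem_dom, hf]
  cases γ; cases γ'
  cases hf; cases hdom; rfl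

theorem f_eq_none_of_notMem {γ : PGraph T} {x : ℕ} (h : x ∉ γ.dom) : γ.f x = none :=
  Option.not_isSome_iff_eq_none.mp (mt (γ.mem_dom x).mpr h)

theorem erase_union (γ₁ γ₂ : PGraph T) (x : ℕ) :
    (γ₁.union γ₂).erase x = (γ₁.erase x).union (γ₂.erase x) :=
  ext_of_f_eq <| funext fun y => by by_cases h : y = x <;> simp [erase, union, h]

theorem union_comm {γ₁ γ₂ : PGraph T} (hd : Disjoint γ₁.dom γ₂.dom) :
    γ₁.union γ₂ = γ₂.union γ₁ := by
  refine ext_of_f_eq (funext fun x => ?_)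
  by_cases h₁ : x ∈ γ₁.dom
  · obtain ⟨v, hv⟩ := Option.isSome_iff_exists.mp ((γ₁.mem_dom x).mp h₁)
    simp [union, hv, f_eq_none_of_notMem (Finset.disjoint_left.mp hd h₁)]
  · cases h₂ : γ₂.f x <;> simp [union, h₂, f_eq_none_of_notMem h₁]

theorem adj_union_of_mem_left {γ₁ γ₂ : PGraph T} {x : ℕ} (h : x ∈ γ₁.dom) :
    (γ₁.union γ₂).adj x = γ₁.adj x := by
  obtain ⟨v, hv⟩ := Option.isSome_iff_exists.mp ((γ₁.mem_dom x).mp h)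
  simp [adj, union, hv]

theorem adj_union_of_notMem_left {γ₁ γ₂ : PGraph T} {x : ℕ} (h : x ∉ γ₁.dom) :
    (γ₁.union γ₂).adj x = γ₂.adj x := by
  simp [adj, union, f_eq_none_of_notMem h]

theorem summit_of_mem {γ : PGraph T} {x : ℕ} (h : x ∈ γ.dom) :
    γ.summit x = ⋃ y ∈ γ.adj x, (γ.erase x).summit y := by
  rw [summit, dif_pos h]

theorem summit_of_notMem {γ : PGraph T} {x : ℕ} (h : x ∉ γ.dom) : γ.summit x = {x} := by
  rw [summit, dif_neg h]

/-- Erasing `x` from the union erases it from both sides, so the recursion runs in lockstep on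
`γ₁.erase x` and `γ₂.erase x`. -/
theorem summit_diff_subset_summit_union (γ₁ γ₂ : PGraph T) (x : ℕ) :
    γ₁.summit x \ γ₂.dom ⊆ (γ₁.union γ₂).summit x := by
  rintro z ⟨hz, hz₂⟩
  by_cases hx : x ∈ γ₁.dom
  · have hxu : x ∈ (γ₁.union γ₂).dom := Finset.mem_union_left _ hx
    rw [summit_of_mem hx] at hz
    obtain ⟨y, hy, hzy⟩ := Set.mem_iUnion₂.mp hz
    rw [summit_of_mem hxu, adj_union_of_mem_left hx, erase_union]
    have hz₂' : z ∉ (γ₂.erase x).dom := fun h => hz₂ (Finset.mem_of_mem_erase h)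
    exact Set.mem_biUnion hy (summit_diff_subset_summit_union _ _ y ⟨hzy, hz₂'⟩)
  · obtain rfl : z = x := by rwa [summit_of_notMem hx] at hz
    have hzu : z ∉ (γ₁.union γ₂).dom := fun h => (Finset.mem_union.mp h).elim hx hz₂
    rw [summit_of_notMem hzu]
    rfl
termination_by γ₁.dom.card
decreasing_by simpa [erase] using Finset.card_erase_lt_of_mem hx

theorem summits_diff_subset_summits_union (γ₁ γ₂ : PGraph T) :
    γ₁.summits \ γ₂.dom ⊆ (γ₁.union γ₂).summits := by
  rintro z ⟨hz, hz₂⟩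
  obtain ⟨x, hx, hzx⟩ := Set.mem_iUnion₂.mp hz
  exact Set.mem_biUnion (Finset.mem_union_left _ hx)
    (summit_diff_subset_summit_union γ₁ γ₂ x ⟨hzx, hz₂⟩)

theorem mem_summit_self_of_mem_loops {γ : PGraph T} {x : ℕ} (h : x ∈ γ.loops) :
    x ∈ γ.summit x := by
  obtain ⟨hx, hxx⟩ := h
  have hx' : x ∉ (γ.erase x).dom := Finset.notMem_erase x γ.dom
  rw [summit_of_mem hx]
  exact Set.mem_biUnion hxx (by rw [summit_of_notMem hx']; rfl)

theorem loops_subset_summits (γ : PGraph T) : γ.loops ⊆ γ.summits :=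
  fun _ hx => Set.mem_biUnion hx.1 (mem_summit_self_of_mem_loops hx)

theorem loops_union_subset (γ₁ γ₂ : PGraph T) :
    (γ₁.union γ₂).loops ⊆ γ₁.loops ∪ γ₂.loops := by
  rintro x ⟨hx, hxx⟩
  by_cases hx₁ : x ∈ γ₁.dom
  · exact Or.inl ⟨hx₁, by rwa [adj_union_of_mem_left hx₁] at hxx⟩
  · have hx₂ : x ∈ γ₂.dom := (Finset.mem_union.mp hx).resolve_left hx₁
    exact Or.inr ⟨hx₂, by rwa [adj_union_of_notMem_left hx₁] at hxx⟩

theorem loops_subset_summits_diff {γ₁ γ₂ : PGraph T} (hd : Disjoint γ₁.dom γ₂.dom) :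
    γ₁.loops ⊆ γ₁.summits \ γ₂.dom :=
  fun _ hx => ⟨loops_subset_summits γ₁ hx, Finset.disjoint_left.mp hd hx.1⟩

end PGraph

/-- In an inverted forest (all summits are self-loops), summits distribute
over disjoint union with subtraction. -/
theorem summits_union_of_loops (T : Type) (γ₁ γ₂ : PGraph T)
    (hd : Disjoint γ₁.dom γ₂.dom)
    (h : (PGraph.union γ₁ γ₂).summits ⊆ (PGraph.union γ₁ γ₂).loops) :
    (PGraph.union γ₁ γ₂).summits =
      (γ₁.summits \ ↑γ₂.dom) ∪ (γ₂.summits \ ↑γ₁.dom) := by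
  refine Set.Subset.antisymm ?_ (Set.union_subset ?_ ?_)
  · calc (γ₁.union γ₂).summits ⊆ (γ₁.union γ₂).loops := h
      _ ⊆ γ₁.loops ∪ γ₂.loops := PGraph.loops_union_subset γ₁ γ₂
      _ ⊆ _ := Set.union_subset_union (PGraph.loops_subset_summits_diff hd)
          (PGraph.loops_subset_summits_diff hd.symm)
  · exact PGraph.summits_diff_subset_summits_union γ₁ γ₂
  · rw [PGraph.union_comm hd]
    exact PGraph.summits_diff_subset_summits_union γ₂ γ₁
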